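/- Let ξ_n (n ≥ 1) be independent random variables with 1 + ξ_n > 0 a.s., let S_n > 0 be non-random, X_0 > 0, and X_{n+1} = X_n(1 + ξ_{n+1}) + S_n. Suppose there exists α > 1 such that Σ_n [E(1+ξ_{n+1})^α − 1]^+ < ∞, Σ_n S_n^α / |1 − E(1+ξ_{n+1})^α|^{α−1} < ∞, and Σ_n [E(1+ξ_{n+1})^α − 1]^− = −∞. Then X_n → 0 a.s. -/

import Mathlib

/-!
Put `Z n = X n ^ α` and `e n = 𝔼 (1 + ξ (n + 1)) ^ α`. With `ε n = |1 - e n| / (2 e n)`, the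
inequality `(a + b) ^ α ≤ (1 + ε) a ^ α + K(ε) b ^ α` and the independence of `ξ (n + 1)` from the
past give `𝔼[Z (n + 1) | ℱ n] ≤ q n * Z n + c n` with `q n = e n + |1 - e n| / 2` and
`c n = K(ε n) * S n ^ α`. Since `K(ε) = O(ε ^ (1 - α))`, the hypotheses make `∑ (q n - 1)⁺` and
`∑ c n` finite and `∑ (1 - q n)⁺` infinite. This is the setting of the Robbins–Siegmund theorem:
with `A n = ∏_{k<n} max (q k) 1` (bounded), `Z n / A n + ∑_{k≥n} c k / A (k + 1)` is a nonnegative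
supermartingale, so `Z n` converges a.s.; and `𝔼 Z n` stays bounded, so `∑ (1 - q n)⁺ Z n < ∞`
a.s., which forces the limit to be `0`.
-/

open MeasureTheory ProbabilityTheory Filter Finset
open scoped Topology

namespace Real

theorem add_rpow_le_one_add_rpow_mul_add_rpow {p η a b : ℝ} (hp : 1 ≤ p) (hη : 0 < η)
    (ha : 0 ≤ a) (hb : 0 ≤ b) :
    (a + b) ^ p ≤ (1 + η) ^ (p - 1) * a ^ p + (1 + η⁻¹) ^ (p - 1) * b ^ p := by
  -- convexity of `x ^ p` at `(1 + η) a` and `(1 + η⁻¹) b` with weights `(1 + η)⁻¹`, `(1 + η⁻¹)⁻¹`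
  have h₁ : 0 < 1 + η := by positivity
  have h₂ : 0 < 1 + η⁻¹ := by positivity
  have hweights : (1 + η)⁻¹ + (1 + η⁻¹)⁻¹ = 1 := by field_simp; ring
  have hconv := (convexOn_rpow hp).2 (Set.mem_Ici.2 (mul_nonneg h₁.le ha))
    (Set.mem_Ici.2 (mul_nonneg h₂.le hb)) (inv_nonneg.2 h₁.le) (inv_nonneg.2 h₂.le) hweights
  simp only [smul_eq_mul, inv_mul_cancel_left₀ h₁.ne', inv_mul_cancel_left₀ h₂.ne',
    mul_rpow h₁.le ha, mul_rpow h₂.le hb, ← mul_assoc] at hconv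
  rwa [rpow_sub_one h₁.ne', rpow_sub_one h₂.ne', div_eq_inv_mul, div_eq_inv_mul]

theorem one_add_rpow_sub_one_le {p η : ℝ} (hp : 1 ≤ p) (hη₀ : 0 ≤ η) (hη₁ : η ≤ 1) :
    (1 + η) ^ (p - 1) ≤ 1 + 2 ^ p * η := by
  -- chord of the convex function x ^ p between 1 and 2
  have hchord := (convexOn_rpow hp).2 (Set.mem_Ici.2 zero_le_one)
    (Set.mem_Ici.2 zero_le_two) (sub_nonneg.2 hη₁) hη₀ (sub_add_cancel 1 η)
  simp only [smul_eq_mul, one_rpow] at hchord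
  calc (1 + η) ^ (p - 1) ≤ (1 + η) ^ p :=
        rpow_le_rpow_of_exponent_le (by linarith) (by linarith)
    _ = ((1 - η) * 1 + η * 2) ^ p := by ring_nf
    _ ≤ 1 + 2 ^ p * η := by nlinarith

theorem tendsto_zero_of_tendsto_rpow_zero {ι : Type*} {l : Filter ι} {x : ι → ℝ} {p : ℝ}
    (hp : 0 < p) (hx : ∀ i, 0 ≤ x i) (h : Tendsto (fun i => x i ^ p) l (𝓝 0)) :
    Tendsto x l (𝓝 0) := by
  have := (h.rpow_const (Or.inr (inv_nonneg.2 hp.le))).congr fun i => rpow_rpow_inv (hx i) hp.ne'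
  rwa [zero_rpow (inv_ne_zero hp.ne')] at this

end Real

/-- The constant `K(ε)` in `(a + b) ^ p ≤ (1 + ε) a ^ p + K(ε) b ^ p`; what matters is that it is
`O(ε ^ (1 - p))` as `ε → 0` (`addRpowConst_le`). -/
noncomputable def addRpowConst (p ε : ℝ) : ℝ := (1 + (min (ε / 2 ^ p) 1)⁻¹) ^ (p - 1)

lemma addRpowConst_nonneg {p ε : ℝ} (hε : 0 ≤ ε) : 0 ≤ addRpowConst p ε := by
  unfold addRpowConst
  positivity

theorem add_rpow_le_one_add_mul_add_addRpowConst_mul {p ε a b : ℝ} (hp : 1 ≤ p) (hε : 0 < ε)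
    (ha : 0 ≤ a) (hb : 0 ≤ b) :
    (a + b) ^ p ≤ (1 + ε) * a ^ p + addRpowConst p ε * b ^ p := by
  set η := min (ε / 2 ^ p) 1
  have h2p : 0 < (2 : ℝ) ^ p := by positivity
  have hη : 0 < η := lt_min (div_pos hε h2p) one_pos
  have hηε : 2 ^ p * η ≤ ε := by
    calc 2 ^ p * η ≤ 2 ^ p * (ε / 2 ^ p) := by gcongr; exact min_le_left _ _
      _ = ε := by field_simp
  refine (Real.add_rpow_le_one_add_rpow_mul_add_rpow hp hη ha hb).trans ?_
  gcongr
  · exact (Real.one_add_rpow_sub_one_le hp hη.le (min_le_right _ _)).trans (by linarith)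
  · exact le_rfl

theorem addRpowConst_le {p ε : ℝ} (hp : 1 ≤ p) (hε : 0 < ε) :
    addRpowConst p ε ≤ (2 ^ (p + 1) * (1 + ε⁻¹)) ^ (p - 1) := by
  have h2p : 1 ≤ (2 : ℝ) ^ p := Real.one_le_rpow one_le_two (by linarith)
  have hε' : 0 < ε⁻¹ := inv_pos.2 hε
  have hinv : (min (ε / 2 ^ p) 1)⁻¹ ≤ 2 ^ p * (1 + ε⁻¹) := by
    rcases min_cases (ε / 2 ^ p) 1 with ⟨h, -⟩ | ⟨h, -⟩ <;> rw [h]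
    · rw [inv_div, div_eq_mul_inv]; nlinarith
    · nlinarith
  unfold addRpowConst
  gcongr
  rw [Real.rpow_add_one two_ne_zero]
  nlinarith

namespace RobbinsSiegmund

def growthFactor (q : ℕ → ℝ) (n : ℕ) : ℝ := ∏ k ∈ range n, max (q k) 1

/-- `∑_{k ≥ n} c k / growthFactor q (k + 1)`, written as the full sum minus a partial sum. -/
noncomputable def discountedTail (q c : ℕ → ℝ) (n : ℕ) : ℝ :=
  ∑' k, c k / growthFactor q (k + 1) - ∑ k ∈ range n, c k / growthFactor q (k + 1)

variable {q c : ℕ → ℝ} {n : ℕ}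

lemma growthFactor_succ (q : ℕ → ℝ) (n : ℕ) :
    growthFactor q (n + 1) = growthFactor q n * max (q n) 1 :=
  prod_range_succ _ _

lemma one_le_growthFactor (q : ℕ → ℝ) (n : ℕ) : 1 ≤ growthFactor q n :=
  one_le_prod fun _ _ => le_max_right _ _

lemma growthFactor_pos (q : ℕ → ℝ) (n : ℕ) : 0 < growthFactor q n :=
  one_pos.trans_le (one_le_growthFactor q n)

lemma monotone_growthFactor (q : ℕ → ℝ) : Monotone (growthFactor q) :=
  monotone_nat_of_le_succ fun n => by
    rw [growthFactor_succ]
    exact le_mul_of_one_le_right (growthFactor_pos q n).le (le_max_right _ _)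

lemma growthFactor_le_exp (hq : Summable fun n => max (q n - 1) 0) (n : ℕ) :
    growthFactor q n ≤ Real.exp (∑' k, max (q k - 1) 0) := by
  have hmax : ∀ k, max (q k) 1 = max (q k - 1) 0 + 1 := fun k => by
    rw [← max_add_add_right, sub_add_cancel, zero_add]
  calc growthFactor q n ≤ ∏ k ∈ range n, Real.exp (max (q k - 1) 0) :=
        prod_le_prod (fun _ _ => zero_le_one.trans (le_max_right _ _))
          fun k _ => (hmax k).trans_le (Real.add_one_le_exp _)
    _ = Real.exp (∑ k ∈ range n, max (q k - 1) 0) := (Real.exp_sum _ _).symm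
    _ ≤ Real.exp (∑' k, max (q k - 1) 0) :=
        Real.exp_le_exp.2 (hq.sum_le_tsum _ fun _ _ => le_max_right _ _)

lemma exists_tendsto_growthFactor (hq : Summable fun n => max (q n - 1) 0) :
    ∃ A, Tendsto (growthFactor q) atTop (𝓝 A) :=
  ⟨_, tendsto_atTop_ciSup (monotone_growthFactor q)
    ⟨_, Set.forall_mem_range.2 (growthFactor_le_exp hq)⟩⟩

lemma summable_div_growthFactor (hc : ∀ n, 0 ≤ c n) (hc_sum : Summable c) :
    Summable fun k => c k / growthFactor q (k + 1) :=
  hc_sum.of_nonneg_of_le (fun k => div_nonneg (hc k) (growthFactor_pos q _).le)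
    fun k => div_le_self (hc k) (one_le_growthFactor q _)

lemma discountedTail_nonneg (hc : ∀ n, 0 ≤ c n) (hc_sum : Summable c) (n : ℕ) :
    0 ≤ discountedTail q c n :=
  sub_nonneg.2 <| (summable_div_growthFactor hc hc_sum).sum_le_tsum _
    fun k _ => div_nonneg (hc k) (growthFactor_pos q _).le

lemma discountedTail_succ (q c : ℕ → ℝ) (n : ℕ) :
    discountedTail q c n = c n / growthFactor q (n + 1) + discountedTail q c (n + 1) := by
  simp only [discountedTail, sum_range_succ]
  ring

lemma exists_tendsto_discountedTail (hc : ∀ n, 0 ≤ c n) (hc_sum : Summable c) :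
    ∃ r, Tendsto (discountedTail q c) atTop (𝓝 r) :=
  ⟨_, tendsto_const_nhds.sub (summable_div_growthFactor hc hc_sum).hasSum.tendsto_sum_nat⟩

lemma inv_growthFactor_mul_add_discountedTail_le {x y : ℝ} (hx : 0 ≤ x)
    (hy : y ≤ q n * x + c n) :
    (growthFactor q (n + 1))⁻¹ * y + discountedTail q c (n + 1)
      ≤ (growthFactor q n)⁻¹ * x + discountedTail q c n := by
  simp only [inv_mul_eq_div]
  have hA := growthFactor_pos q n
  have hqx : q n * x / growthFactor q (n + 1) ≤ x / growthFactor q n := by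
    rw [growthFactor_succ, div_le_div_iff₀ (mul_pos hA (one_pos.trans_le (le_max_right _ _))) hA]
    have := mul_le_mul_of_nonneg_right (le_max_left (q n) 1) hx
    nlinarith [mul_le_mul_of_nonneg_left this hA.le]
  have hy' : y / growthFactor q (n + 1) ≤ q n * x / growthFactor q (n + 1)
      + c n / growthFactor q (n + 1) := by
    rw [← add_div]
    exact div_le_div_of_nonneg_right hy (growthFactor_pos q _).le
  rw [discountedTail_succ q c n]
  linarith

theorem summable_max_one_sub_mul_of_le_mul_add {a : ℕ → ℝ} (ha : ∀ n, 0 ≤ a n)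
    (hc : ∀ n, 0 ≤ c n) (hrec : ∀ n, a (n + 1) ≤ q n * a n + c n)
    (hq : Summable fun n => max (q n - 1) 0) (hc_sum : Summable c) :
    Summable fun n => max (1 - q n) 0 * a n := by
  set b := fun n => (growthFactor q n)⁻¹ * a n + discountedTail q c n
  have hb : Antitone b := antitone_nat_of_succ_le fun n =>
    inv_growthFactor_mul_add_discountedTail_le (ha n) (hrec n)
  set M := Real.exp (∑' k, max (q k - 1) 0) * b 0
  have ha_le : ∀ n, a n ≤ M := fun n => by
    have hA := growthFactor_pos q n
    have hb0 : 0 ≤ b 0 := (mul_nonneg (inv_nonneg.2 (growthFactor_pos q 0).le) (ha 0)).trans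
      (le_add_of_nonneg_right (discountedTail_nonneg hc hc_sum 0))
    calc a n = growthFactor q n * ((growthFactor q n)⁻¹ * a n) := by field_simp
      _ ≤ growthFactor q n * b 0 := by
          refine mul_le_mul_of_nonneg_left ?_ hA.le
          exact (le_add_of_nonneg_right (discountedTail_nonneg hc hc_sum n)).trans
            (hb (Nat.zero_le n))
      _ ≤ M := mul_le_mul_of_nonneg_right (growthFactor_le_exp hq n) hb0
  have hterm : ∀ n, max (1 - q n) 0 * a n ≤ a n - a (n + 1) + c n + M * max (q n - 1) 0 := by
    intro n
    have hmax : max (1 - q n) 0 = max (q n - 1) 0 + 1 - q n := by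
      rcases le_total (q n) 1 with h | h
      · rw [max_eq_left (by linarith), max_eq_right (by linarith)]; ring
      · rw [max_eq_right (by linarith), max_eq_left (by linarith)]; ring
    rw [hmax]
    nlinarith [hrec n, ha_le n, le_max_right (q n - 1) 0, mul_le_mul_of_nonneg_left (ha_le n)
      (le_max_right (q n - 1) 0)]
  refine summable_of_sum_range_le (fun n => mul_nonneg (le_max_right _ _) (ha n))
    (c := a 0 + ∑' n, c n + M * ∑' n, max (q n - 1) 0) fun N => ?_
  calc ∑ n ∈ range N, max (1 - q n) 0 * a n
      ≤ ∑ n ∈ range N, (a n - a (n + 1) + c n + M * max (q n - 1) 0) :=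
        sum_le_sum fun n _ => hterm n
    _ = a 0 - a N + ∑ n ∈ range N, c n + M * ∑ n ∈ range N, max (q n - 1) 0 := by
        rw [sum_add_distrib, sum_add_distrib, sum_range_sub', mul_sum]
    _ ≤ a 0 + ∑' n, c n + M * ∑' n, max (q n - 1) 0 := by
        have hM : 0 ≤ M := (ha 0).trans (ha_le 0)
        gcongr
        · linarith [ha N]
        · exact hc_sum.sum_le_tsum _ fun n _ => hc n
        · exact hq.sum_le_tsum _ fun n _ => le_max_right _ _

end RobbinsSiegmund

namespace MeasureTheory

variable {Ω : Type*} {m0 : MeasurableSpace Ω} {μ : Measure Ω}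

lemma eLpNorm_one_eq_ofReal_integral {f : Ω → ℝ} (hf : Integrable f μ) (hf_nonneg : 0 ≤ᵐ[μ] f) :
    eLpNorm f 1 μ = ENNReal.ofReal (∫ ω, f ω ∂μ) := by
  rw [eLpNorm_one_eq_lintegral_enorm, ← ofReal_integral_norm_eq_lintegral_enorm hf]
  exact congrArg _ (integral_congr_ae (hf_nonneg.mono fun ω h => Real.norm_of_nonneg h))

theorem ae_summable_of_summable_integral {f : ℕ → Ω → ℝ} (hf_int : ∀ n, Integrable (f n) μ)
    (hf_nonneg : ∀ n, 0 ≤ᵐ[μ] f n) (hsum : Summable fun n => ∫ ω, f n ω ∂μ) :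
    ∀ᵐ ω ∂μ, Summable fun n => f n ω := by
  have hnorm : ∑' n, eLpNorm (f n) 1 μ ≠ ⊤ := by
    simpa only [eLpNorm_one_eq_ofReal_integral (hf_int _) (hf_nonneg _)]
      using hsum.tsum_ofReal_ne_top
  filter_upwards [summable_norm_of_tsum_eLpNorm_ne_top le_rfl (fun n => (hf_int n).1) hnorm]
    with ω h
  exact h.of_norm

theorem Supermartingale.exists_ae_tendsto_of_nonneg [IsFiniteMeasure μ] {ℱ : Filtration ℕ m0}
    {f : ℕ → Ω → ℝ} (hf : Supermartingale f ℱ μ) (hf_nonneg : ∀ n, 0 ≤ᵐ[μ] f n) :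
    ∀ᵐ ω ∂μ, ∃ c, Tendsto (fun n => f n ω) atTop (𝓝 c) := by
  have hbdd : ∀ n, eLpNorm ((-f) n) 1 μ ≤ (∫ ω, f 0 ω ∂μ).toNNReal := fun n => by
    rw [Pi.neg_apply, eLpNorm_neg, eLpNorm_one_eq_ofReal_integral (hf.integrable n) (hf_nonneg n)]
    exact ENNReal.ofReal_le_ofReal <| by
      simpa using hf.setIntegral_le (Nat.zero_le n) MeasurableSet.univ
  filter_upwards [hf.neg.exists_ae_tendsto_of_bdd hbdd] with ω ⟨c, hc⟩
  exact ⟨-c, by simpa using hc.neg⟩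

lemma condExp_const_mul_add_const [IsFiniteMeasure μ] {m : MeasurableSpace Ω} (hm : m ≤ m0)
    {f : Ω → ℝ} (hf : Integrable f μ) (a b : ℝ) :
    μ[fun ω => a * f ω + b|m] =ᵐ[μ] fun ω => a * μ[f|m] ω + b := by
  have hsum := condExp_add (hf.const_mul a) (integrable_const b) m
  rw [condExp_const hm] at hsum
  filter_upwards [hsum, condExp_smul a f m] with ω h h'
  exact h.trans (congrArg (· + b) h')

end MeasureTheory

lemma nonpos_of_tendsto_of_summable_mul {v z : ℕ → ℝ} {L : ℝ} (hv : ∀ n, 0 ≤ v n)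
    (hv_sum : ¬ Summable v) (hz : Tendsto z atTop (𝓝 L)) (hvz : Summable fun n => v n * z n) :
    L ≤ 0 := by
  by_contra! hL
  obtain ⟨N, hN⟩ := eventually_atTop.1 (hz.eventually (eventually_gt_nhds (half_lt_self hL)))
  refine hv_sum ((summable_nat_add_iff N).1 <|
    (((summable_nat_add_iff N).2 hvz).mul_left (2 / L)).of_nonneg_of_le (fun n => hv _)
      fun n => ?_)
  calc v (n + N) = 2 / L * (v (n + N) * (L / 2)) := by field_simp
    _ ≤ 2 / L * (v (n + N) * z (n + N)) := by
        gcongr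
        · exact hv _
        · exact (hN _ (Nat.le_add_left N n)).le

namespace RobbinsSiegmund

variable {Ω : Type*} {m0 : MeasurableSpace Ω} {μ : Measure Ω} [IsProbabilityMeasure μ]
  {ℱ : Filtration ℕ m0} {Z : ℕ → Ω → ℝ} {q c : ℕ → ℝ}

theorem supermartingale_inv_growthFactor_mul_add_discountedTail
    (hZ_adapted : StronglyAdapted ℱ Z) (hZ_int : ∀ n, Integrable (Z n) μ)
    (hZ_nonneg : ∀ n, 0 ≤ᵐ[μ] Z n)
    (hcond : ∀ n, μ[Z (n + 1)|ℱ n] ≤ᵐ[μ] fun ω => q n * Z n ω + c n) :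
    Supermartingale (fun n ω => (growthFactor q n)⁻¹ * Z n ω + discountedTail q c n) ℱ μ :=
  supermartingale_nat (fun n => ((hZ_adapted n).const_mul _).add stronglyMeasurable_const)
    (fun n => ((hZ_int n).const_mul _).add (integrable_const _)) fun n => by
      filter_upwards [condExp_const_mul_add_const (ℱ.le n) (hZ_int (n + 1)) _ _, hcond n,
        hZ_nonneg n] with ω h hstep hnonneg
      exact h.trans_le (inv_growthFactor_mul_add_discountedTail_le hnonneg hstep)

theorem ae_exists_tendsto_of_condExp_le
    (hZ_adapted : StronglyAdapted ℱ Z) (hZ_int : ∀ n, Integrable (Z n) μ)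
    (hZ_nonneg : ∀ n, 0 ≤ᵐ[μ] Z n) (hc : ∀ n, 0 ≤ c n)
    (hcond : ∀ n, μ[Z (n + 1)|ℱ n] ≤ᵐ[μ] fun ω => q n * Z n ω + c n)
    (hq : Summable fun n => max (q n - 1) 0) (hc_sum : Summable c) :
    ∀ᵐ ω ∂μ, ∃ L, Tendsto (fun n => Z n ω) atTop (𝓝 L) := by
  have hU_nonneg : ∀ n, 0 ≤ᵐ[μ] fun ω => (growthFactor q n)⁻¹ * Z n ω + discountedTail q c n :=
    fun n => (hZ_nonneg n).mono fun ω h =>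
      add_nonneg (mul_nonneg (inv_nonneg.2 (growthFactor_pos q n).le) h)
        (discountedTail_nonneg hc hc_sum n)
  obtain ⟨A, hA⟩ := exists_tendsto_growthFactor hq
  obtain ⟨r, hr⟩ := exists_tendsto_discountedTail (q := q) hc hc_sum
  filter_upwards [(supermartingale_inv_growthFactor_mul_add_discountedTail hZ_adapted hZ_int
    hZ_nonneg hcond).exists_ae_tendsto_of_nonneg hU_nonneg] with ω ⟨u, hu⟩
  refine ⟨A * (u - r), (hA.mul (hu.sub hr)).congr fun n => ?_⟩
  rw [add_sub_cancel_right, mul_inv_cancel_left₀ (growthFactor_pos q n).ne']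

lemma integral_succ_le_of_condExp_le (hZ_int : ∀ n, Integrable (Z n) μ)
    (hcond : ∀ n, μ[Z (n + 1)|ℱ n] ≤ᵐ[μ] fun ω => q n * Z n ω + c n) (n : ℕ) :
    ∫ ω, Z (n + 1) ω ∂μ ≤ q n * ∫ ω, Z n ω ∂μ + c n :=
  calc ∫ ω, Z (n + 1) ω ∂μ = ∫ ω, μ[Z (n + 1)|ℱ n] ω ∂μ := (integral_condExp (ℱ.le n)).symm
    _ ≤ ∫ ω, (q n * Z n ω + c n) ∂μ :=
        integral_mono_ae integrable_condExp ((hZ_int n).const_mul _ |>.add (integrable_const _))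
          (hcond n)
    _ = q n * ∫ ω, Z n ω ∂μ + c n := by
        rw [integral_add ((hZ_int n).const_mul _) (integrable_const _), integral_const_mul,
          integral_const, probReal_univ, one_smul]

theorem ae_summable_max_one_sub_mul_of_condExp_le (hZ_int : ∀ n, Integrable (Z n) μ)
    (hZ_nonneg : ∀ n, 0 ≤ᵐ[μ] Z n) (hc : ∀ n, 0 ≤ c n)
    (hcond : ∀ n, μ[Z (n + 1)|ℱ n] ≤ᵐ[μ] fun ω => q n * Z n ω + c n)
    (hq : Summable fun n => max (q n - 1) 0) (hc_sum : Summable c) :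
    ∀ᵐ ω ∂μ, Summable fun n => max (1 - q n) 0 * Z n ω := by
  refine ae_summable_of_summable_integral (fun n => (hZ_int n).const_mul _)
    (fun n => (hZ_nonneg n).mono fun ω h => mul_nonneg (le_max_right _ _) h) ?_
  simp only [integral_const_mul]
  exact summable_max_one_sub_mul_of_le_mul_add (fun n => integral_nonneg_of_ae (hZ_nonneg n)) hc
    (integral_succ_le_of_condExp_le hZ_int hcond) hq hc_sum

theorem ae_tendsto_zero_of_condExp_le
    (hZ_adapted : StronglyAdapted ℱ Z) (hZ_int : ∀ n, Integrable (Z n) μ)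
    (hZ_nonneg : ∀ n, 0 ≤ᵐ[μ] Z n) (hc : ∀ n, 0 ≤ c n)
    (hcond : ∀ n, μ[Z (n + 1)|ℱ n] ≤ᵐ[μ] fun ω => q n * Z n ω + c n)
    (hq : Summable fun n => max (q n - 1) 0) (hc_sum : Summable c)
    (hdiv : ¬ Summable fun n => max (1 - q n) 0) :
    ∀ᵐ ω ∂μ, Tendsto (fun n => Z n ω) atTop (𝓝 0) := by
  filter_upwards [ae_exists_tendsto_of_condExp_le hZ_adapted hZ_int hZ_nonneg hc hcond hq hc_sum,
    ae_summable_max_one_sub_mul_of_condExp_le hZ_int hZ_nonneg hc hcond hq hc_sum,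
    ae_all_iff.2 hZ_nonneg] with ω ⟨L, hL⟩ hsum hnonneg
  obtain rfl : L = 0 := le_antisymm
    (nonpos_of_tendsto_of_summable_mul (fun n => le_max_right _ _) hdiv hL hsum)
    (ge_of_tendsto' hL hnonneg)
  exact hL

end RobbinsSiegmund

namespace MeasureTheory

variable {Ω : Type*} {m0 : MeasurableSpace Ω} {μ : Measure Ω}

lemma integral_pos_of_ae_pos [NeZero μ] {f : Ω → ℝ} (hf : Integrable f μ)
    (hpos : ∀ᵐ ω ∂μ, 0 < f ω) : 0 < ∫ ω, f ω ∂μ := by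
  rw [integral_pos_iff_support_of_nonneg_ae (hpos.mono fun _ h => h.le) hf, pos_iff_ne_zero]
  intro h0
  obtain ⟨ω, hω, hfω⟩ := ((measure_eq_zero_iff_ae_notMem.1 h0).and hpos).exists
  exact hω hfω.ne'

lemma condExp_mul_eq_mul_integral_of_indep [IsProbabilityMeasure μ] {m m₁ : MeasurableSpace Ω}
    (hm : m ≤ m0) (hm₁ : m₁ ≤ m0) {Y G : Ω → ℝ} (hY : StronglyMeasurable[m] Y)
    (hG : StronglyMeasurable[m₁] G) (hindep : Indep m₁ m μ) (hYG : Integrable (Y * G) μ)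
    (hG_int : Integrable G μ) :
    μ[Y * G|m] =ᵐ[μ] fun ω => Y ω * ∫ ω', G ω' ∂μ := by
  filter_upwards [condExp_mul_of_stronglyMeasurable_left hY hYG hG_int,
    condExp_indep_eq hm₁ hm hG hindep] with ω h₁ h₂
  rw [h₁, Pi.mul_apply, h₂]

end MeasureTheory

section LinearRecursion

variable {Ω : Type*} {m0 : MeasurableSpace Ω} {μ : Measure Ω} {ξ : ℕ → Ω → ℝ} {S : ℕ → ℝ}
  {X : ℕ → Ω → ℝ} {X₀ α : ℝ}

lemma ae_forall_pos_of_rec (hξ_pos : ∀ n, ∀ᵐ ω ∂μ, 0 < 1 + ξ n ω) (hS : ∀ n, 0 ≤ S n)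
    (hX₀ : 0 < X₀) (hX0 : ∀ ω, X 0 ω = X₀)
    (hrec : ∀ n ω, X (n + 1) ω = X n ω * (1 + ξ (n + 1) ω) + S n) :
    ∀ᵐ ω ∂μ, ∀ n, 0 < X n ω := by
  filter_upwards [ae_all_iff.2 hξ_pos] with ω hω n
  induction n with
  | zero => rw [hX0]; exact hX₀
  | succ n ih => rw [hrec]; exact add_pos_of_pos_of_nonneg (mul_pos ih (hω _)) (hS n)

lemma stronglyAdapted_natural_of_rec (hξ : ∀ n, StronglyMeasurable (ξ n))
    (hX0 : ∀ ω, X 0 ω = X₀) (hrec : ∀ n ω, X (n + 1) ω = X n ω * (1 + ξ (n + 1) ω) + S n) :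
    StronglyAdapted (Filtration.natural ξ hξ) X := by
  intro n
  induction n with
  | zero => rw [funext hX0]; exact stronglyMeasurable_const
  | succ n ih =>
    rw [funext (hrec n)]
    exact ((ih.mono (Filtration.mono _ n.le_succ)).mul (stronglyMeasurable_const.add
      (Filtration.stronglyAdapted_natural hξ _))).add stronglyMeasurable_const

lemma ae_rpow_succ_le (hα : 1 ≤ α) {ε : ℝ} (hε : 0 < ε) (hξ_pos : ∀ n, ∀ᵐ ω ∂μ, 0 < 1 + ξ n ω)
    (hS : ∀ n, 0 ≤ S n) (hX_pos : ∀ᵐ ω ∂μ, ∀ n, 0 < X n ω)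
    (hrec : ∀ n ω, X (n + 1) ω = X n ω * (1 + ξ (n + 1) ω) + S n) (n : ℕ) :
    ∀ᵐ ω ∂μ, X (n + 1) ω ^ α
      ≤ (1 + ε) * (X n ω ^ α * (1 + ξ (n + 1) ω) ^ α) + addRpowConst α ε * S n ^ α := by
  filter_upwards [hX_pos, hξ_pos (n + 1)] with ω hX hξ
  rw [hrec, ← Real.mul_rpow (hX n).le hξ.le]
  exact add_rpow_le_one_add_mul_add_addRpowConst_mul hα hε (mul_nonneg (hX n).le hξ.le) (hS n)

lemma indepFun_rpow_natural (hξ : ∀ n, StronglyMeasurable (ξ n)) (hξ_indep : iIndepFun ξ μ)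
    (hX : StronglyAdapted (Filtration.natural ξ hξ) X) (n : ℕ) :
    IndepFun (fun ω => X n ω ^ α) (fun ω => (1 + ξ (n + 1) ω) ^ α) μ := by
  have hXξ : IndepFun (X n) (ξ (n + 1)) μ := (IndepFun_iff_Indep _ _ _).2 <|
    indep_of_indep_of_le_left (hξ_indep.indep_comap_natural_of_lt hξ n.lt_succ_self).symm
      (hX n).measurable.comap_le
  exact hXξ.comp (φ := fun x : ℝ => x ^ α) (ψ := fun x : ℝ => (1 + x) ^ α) (by fun_prop)
    (by fun_prop)

variable [IsProbabilityMeasure μ]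

lemma integrable_rpow_of_rec (hα : 1 ≤ α) (hξ : ∀ n, StronglyMeasurable (ξ n))
    (hξ_indep : iIndepFun ξ μ) (hξ_pos : ∀ n, ∀ᵐ ω ∂μ, 0 < 1 + ξ n ω)
    (hint : ∀ n, Integrable (fun ω => (1 + ξ n ω) ^ α) μ) (hS : ∀ n, 0 ≤ S n)
    (hX_pos : ∀ᵐ ω ∂μ, ∀ n, 0 < X n ω) (hX0 : ∀ ω, X 0 ω = X₀)
    (hrec : ∀ n ω, X (n + 1) ω = X n ω * (1 + ξ (n + 1) ω) + S n) (n : ℕ) :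
    Integrable (fun ω => X n ω ^ α) μ := by
  have hX := stronglyAdapted_natural_of_rec hξ hX0 hrec
  induction n with
  | zero => simpa only [hX0] using integrable_const (X₀ ^ α)
  | succ n ih =>
    have hprod := (indepFun_rpow_natural hξ hξ_indep hX n).integrable_mul ih (hint (n + 1))
    have hbound : Integrable (fun ω => (1 + 1) * (X n ω ^ α * (1 + ξ (n + 1) ω) ^ α)
        + addRpowConst α 1 * S n ^ α) μ := (hprod.const_mul _).add (integrable_const _)
    refine hbound.mono'
      (((hX (n + 1)).mono ((Filtration.natural ξ hξ).le _)).measurable.pow_const α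
        |>.aestronglyMeasurable) ?_
    filter_upwards [ae_rpow_succ_le hα one_pos hξ_pos hS hX_pos hrec n, hX_pos] with ω h hpos
    rw [Real.norm_of_nonneg (Real.rpow_nonneg (hpos _).le α)]
    exact h

lemma condExp_rpow_succ_le (hα : 1 ≤ α) {ε : ℝ} (hε : 0 < ε)
    (hξ : ∀ n, StronglyMeasurable (ξ n)) (hξ_indep : iIndepFun ξ μ)
    (hξ_pos : ∀ n, ∀ᵐ ω ∂μ, 0 < 1 + ξ n ω)
    (hint : ∀ n, Integrable (fun ω => (1 + ξ n ω) ^ α) μ) (hS : ∀ n, 0 ≤ S n)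
    (hX_pos : ∀ᵐ ω ∂μ, ∀ n, 0 < X n ω) (hX0 : ∀ ω, X 0 ω = X₀)
    (hrec : ∀ n ω, X (n + 1) ω = X n ω * (1 + ξ (n + 1) ω) + S n) (n : ℕ) :
    μ[fun ω => X (n + 1) ω ^ α|Filtration.natural ξ hξ n]
      ≤ᵐ[μ] fun ω => (1 + ε) * (∫ ω', (1 + ξ (n + 1) ω') ^ α ∂μ) * X n ω ^ α
        + addRpowConst α ε * S n ^ α := by
  have hX := stronglyAdapted_natural_of_rec hξ hX0 hrec
  have hZ := integrable_rpow_of_rec hα hξ hξ_indep hξ_pos hint hS hX_pos hX0 hrec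
  have hprod := (indepFun_rpow_natural hξ hξ_indep hX n).integrable_mul (hZ n) (hint (n + 1))
  have hG : StronglyMeasurable[MeasurableSpace.comap (ξ (n + 1)) inferInstance]
      fun ω => (1 + ξ (n + 1) ω) ^ α :=
    ((measurable_const.add (comap_measurable _)).pow_const α).stronglyMeasurable
  have hbound : Integrable (fun ω => (1 + ε) * (X n ω ^ α * (1 + ξ (n + 1) ω) ^ α)
      + addRpowConst α ε * S n ^ α) μ := (hprod.const_mul _).add (integrable_const _)
  refine (condExp_mono (hZ (n + 1)) hbound
    (ae_rpow_succ_le hα hε hξ_pos hS hX_pos hrec n)).trans ?_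
  filter_upwards [condExp_const_mul_add_const ((Filtration.natural ξ hξ).le n) hprod (1 + ε) _,
    condExp_mul_eq_mul_integral_of_indep ((Filtration.natural ξ hξ).le n)
      (hξ (n + 1)).measurable.comap_le (((hX n).measurable.pow_const α).stronglyMeasurable) hG
      (hξ_indep.indep_comap_natural_of_lt hξ n.lt_succ_self) hprod (hint (n + 1))] with ω h₁ h₂
  refine le_of_eq (h₁.trans ?_)
  rw [h₂]
  ring

end LinearRecursion

section Coefficients

lemma exists_one_le_forall_le_of_summable_max_sub_one {e : ℕ → ℝ}
    (h : Summable fun n => max (e n - 1) 0) : ∃ B, 1 ≤ B ∧ ∀ n, e n ≤ B :=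
  ⟨1 + ∑' n, max (e n - 1) 0, le_add_of_nonneg_right (tsum_nonneg fun _ => le_max_right _ _),
    fun n => by linarith [le_max_left (e n - 1) 0, h.le_tsum n fun _ _ => le_max_right _ _]⟩

variable {e : ℝ}

lemma one_add_abs_sub_div_mul (he : 0 < e) : (1 + |1 - e| / (2 * e)) * e = e + |1 - e| / 2 := by
  field_simp

lemma max_one_add_abs_sub_div_mul_sub_one (he : 0 < e) :
    max ((1 + |1 - e| / (2 * e)) * e - 1) 0 = 3 / 2 * max (e - 1) 0 := by
  rw [one_add_abs_sub_div_mul he]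
  rcases le_total e 1 with h | h
  · rw [abs_of_nonneg (by linarith), max_eq_right (by linarith), max_eq_right (by linarith)]
    ring
  · rw [abs_of_nonpos (by linarith), max_eq_left (by linarith), max_eq_left (by linarith)]
    ring

lemma max_one_sub_one_add_abs_sub_div_mul (he : 0 < e) :
    max (1 - (1 + |1 - e| / (2 * e)) * e) 0 = -(1 / 2) * min (e - 1) 0 := by
  rw [one_add_abs_sub_div_mul he]
  rcases le_total e 1 with h | h
  · rw [abs_of_nonneg (by linarith), max_eq_left (by linarith), min_eq_left (by linarith)]
    ring
  · rw [abs_of_nonpos (by linarith), max_eq_right (by linarith), min_eq_right (by linarith)]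
    ring

lemma addRpowConst_abs_sub_div_mul_le {α B : ℝ} (hα : 1 ≤ α) (he : 0 < e) (he1 : e ≠ 1)
    (heB : e ≤ B) (hB : 1 ≤ B) :
    addRpowConst α (|1 - e| / (2 * e))
      ≤ (2 ^ (α + 1) * (3 * B)) ^ (α - 1) / |1 - e| ^ (α - 1) := by
  have hd : 0 < |1 - e| := abs_pos.2 (sub_ne_zero.2 he1.symm)
  have hdB : |1 - e| ≤ B := abs_sub_le_iff.2 ⟨by linarith, by linarith⟩
  refine (addRpowConst_le hα (by positivity)).trans ?_
  rw [← Real.div_rpow (by positivity) hd.le, mul_div_assoc, inv_div]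
  gcongr
  rw [add_div' _ _ _ hd.ne', div_le_div_iff_of_pos_right hd]
  linarith

lemma summable_addRpowConst_abs_sub_div_mul_mul {α B : ℝ} {e S : ℕ → ℝ} (hα : 1 ≤ α)
    (he : ∀ n, 0 < e n) (he1 : ∀ n, e n ≠ 1) (heB : ∀ n, e n ≤ B) (hB : 1 ≤ B)
    (hS : ∀ n, 0 ≤ S n) (hsum : Summable fun n => S n ^ α / |1 - e n| ^ (α - 1)) :
    Summable fun n => addRpowConst α (|1 - e n| / (2 * e n)) * S n ^ α := by
  refine (hsum.mul_left ((2 ^ (α + 1) * (3 * B)) ^ (α - 1))).of_nonneg_of_le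
    (fun n => mul_nonneg (addRpowConst_nonneg (div_nonneg (abs_nonneg _) (by linarith [he n])))
      (Real.rpow_nonneg (hS n) α))
    fun n => ?_
  calc addRpowConst α (|1 - e n| / (2 * e n)) * S n ^ α
      ≤ (2 ^ (α + 1) * (3 * B)) ^ (α - 1) / |1 - e n| ^ (α - 1) * S n ^ α :=
        mul_le_mul_of_nonneg_right (addRpowConst_abs_sub_div_mul_le hα (he n) (he1 n) (heB n) hB)
          (Real.rpow_nonneg (hS n) α)
    _ = (2 ^ (α + 1) * (3 * B)) ^ (α - 1) * (S n ^ α / |1 - e n| ^ (α - 1)) := by ring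

lemma not_summable_max_one_sub_one_add_abs_sub_div_mul_mul {e : ℕ → ℝ} (he : ∀ n, 0 < e n)
    (hdiv : Tendsto (fun N => ∑ n ∈ range N, min (e n - 1) 0) atTop atBot) :
    ¬ Summable fun n => max (1 - (1 + |1 - e n| / (2 * e n)) * e n) 0 := fun h =>
  not_tendsto_atBot_of_tendsto_nhds
    ((summable_congr fun n => by rw [max_one_sub_one_add_abs_sub_div_mul (he n)]; ring).1
      (h.mul_left (-2))).hasSum.tendsto_sum_nat hdiv

end Coefficients

theorem linear_nonhomogeneous_alpha_gt_one
    {Ω : Type*} [MeasurableSpace Ω] (μ : Measure Ω) [IsProbabilityMeasure μ]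
    (ξ : ℕ → Ω → ℝ) (hξ_meas : ∀ n, Measurable (ξ n))
    (hξ_indep : iIndepFun ξ μ)
    (hξ_pos : ∀ n, ∀ᵐ ω ∂μ, 0 < 1 + ξ n ω)
    (S : ℕ → ℝ) (hS : ∀ n, 0 < S n)
    (X : ℕ → Ω → ℝ) (X₀ : ℝ) (hX₀ : 0 < X₀) (hX0 : ∀ ω, X 0 ω = X₀)
    (hrec : ∀ n ω, X (n + 1) ω = X n ω * (1 + ξ (n + 1) ω) + S n)
    (α : ℝ) (hα : 1 < α)
    (hint : ∀ n, Integrable (fun ω => (1 + ξ n ω) ^ α) μ)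
    (hne : ∀ n, (∫ ω, (1 + ξ (n + 1) ω) ^ α ∂μ) ≠ 1)
    (hpos_sum : Summable fun n => max ((∫ ω, (1 + ξ (n + 1) ω) ^ α ∂μ) - 1) 0)
    (hS_sum : Summable fun n =>
      S n ^ α / |1 - ∫ ω, (1 + ξ (n + 1) ω) ^ α ∂μ| ^ (α - 1))
    (hneg_div : Tendsto (fun N => ∑ n ∈ Finset.range N,
        min ((∫ ω, (1 + ξ (n + 1) ω) ^ α ∂μ) - 1) 0) atTop atBot) :
    ∀ᵐ ω ∂μ, Tendsto (fun n => X n ω) atTop (nhds 0) := by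
  have hξ : ∀ n, StronglyMeasurable (ξ n) := fun n => (hξ_meas n).stronglyMeasurable
  have hS' : ∀ n, 0 ≤ S n := fun n => (hS n).le
  set e : ℕ → ℝ := fun n => ∫ ω, (1 + ξ (n + 1) ω) ^ α ∂μ
  have he : ∀ n, 0 < e n := fun n =>
    integral_pos_of_ae_pos (hint _) ((hξ_pos _).mono fun _ h => Real.rpow_pos_of_pos h α)
  obtain ⟨B, hB, heB⟩ := exists_one_le_forall_le_of_summable_max_sub_one hpos_sum
  have hε : ∀ n, 0 < |1 - e n| / (2 * e n) := fun n =>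
    div_pos (abs_pos.2 (sub_ne_zero.2 (hne n).symm)) (by linarith [he n])
  have hX := stronglyAdapted_natural_of_rec hξ hX0 hrec
  have hX_pos := ae_forall_pos_of_rec hξ_pos hS' hX₀ hX0 hrec
  have hZ := RobbinsSiegmund.ae_tendsto_zero_of_condExp_le (Z := fun n ω => X n ω ^ α)
    (fun n => ((hX n).measurable.pow_const α).stronglyMeasurable)
    (integrable_rpow_of_rec hα.le hξ hξ_indep hξ_pos hint hS' hX_pos hX0 hrec)
    (fun n => hX_pos.mono fun ω h => Real.rpow_nonneg (h n).le α)
    (fun n => mul_nonneg (addRpowConst_nonneg (hε n).le) (Real.rpow_nonneg (hS' n) α))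
    (fun n => condExp_rpow_succ_le hα.le (hε n) hξ hξ_indep hξ_pos hint hS' hX_pos hX0 hrec n)
    ((summable_congr fun n => max_one_add_abs_sub_div_mul_sub_one (he n)).2
      (hpos_sum.mul_left _))
    (summable_addRpowConst_abs_sub_div_mul_mul hα.le he hne heB hB hS' hS_sum)
    (not_summable_max_one_sub_one_add_abs_sub_div_mul_mul he hneg_div)
  filter_upwards [hZ, hX_pos] with ω hZω hpos
  exact Real.tendsto_zero_of_tendsto_rpow_zero (by linarith) (fun n => (hpos n).le) hZω
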